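/- arXiv:2210.08684 — 2 statements merged into one kernel-verified Lean document; each statement's English description precedes it below -/
import Mathlib

section
/- Let r₁, r₂ ≥ 1, n = r₁ + r₂, and let x ∈ ℝⁿ satisfy (x₁ + ⋯ + x_{r₁})/r₁ > (x_{r₁+1} + ⋯ + x_n)/r₂, i.e. the mean of the first r₁ coordinates strictly exceeds the mean of the last r₂ coordinates. Then for every real number c there exists a weakly decreasing z ∈ ℝⁿ with ‖x − z‖ < ‖x − c·𝟙‖ in the Euclidean norm; in particular, no constant vector is a nearest point to x in the closed convex cone of weakly decreasing vectors. -/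
/-!
Put `v := (1/r₁, …, 1/r₁, -1/r₂, …, -1/r₂)`, a weakly decreasing vector orthogonal to `𝟙`.
Then `⟪x - c·𝟙, v⟫` is the difference of the two block means, which is positive, so moving
from `c·𝟙` a little in the direction `v` gets strictly closer to `x` and stays weakly decreasing.
-/

/-- The constant vector `c·𝟙` in Euclidean space. -/
noncomputable def constVec (n : ℕ) (c : ℝ) : EuclideanSpace ℝ (Fin n) := WithLp.toLp 2 (fun _ => c)

open Finset RealInnerProductSpace

theorem exists_pos_norm_sub_add_smul_lt {E : Type*} [NormedAddCommGroup E]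
    [InnerProductSpace ℝ E] {x p v : E} (h : 0 < ⟪x - p, v⟫) :
    ∃ ε : ℝ, 0 < ε ∧ ‖x - (p + ε • v)‖ < ‖x - p‖ := by
  have hv : 0 < ‖v‖ ^ 2 := by
    refine pow_pos (norm_pos_iff.2 ?_) 2
    rintro rfl
    simp at h
  set D := ⟪x - p, v⟫
  refine ⟨D / ‖v‖ ^ 2, by positivity, ?_⟩
  refine (pow_lt_pow_iff_left₀ (norm_nonneg _) (norm_nonneg _) two_ne_zero).1 ?_
  rw [← sub_sub, norm_sub_sq_real, real_inner_smul_right, norm_smul, mul_pow,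
    Real.norm_eq_abs, sq_abs]
  -- the optimal step `ε = D / ‖v‖²` gains exactly `D² / ‖v‖²`
  have hgain : 2 * (D / ‖v‖ ^ 2 * D) - (D / ‖v‖ ^ 2) ^ 2 * ‖v‖ ^ 2 = D ^ 2 / ‖v‖ ^ 2 := by
    field_simp
    ring
  have : 0 < D ^ 2 / ‖v‖ ^ 2 := by positivity
  linarith

noncomputable def blockContrast (n r₁ r₂ : ℕ) : EuclideanSpace ℝ (Fin n) :=
  WithLp.toLp 2 fun i => if (i : ℕ) < r₁ then (r₁ : ℝ)⁻¹ else -(r₂ : ℝ)⁻¹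

theorem antitone_blockContrast (n r₁ r₂ : ℕ) :
    Antitone (blockContrast n r₁ r₂ : Fin n → ℝ) := by
  intro i j hij
  simp only [blockContrast]
  split_ifs with hj hi hi
  · rfl
  · exact absurd (lt_of_le_of_lt (Fin.le_def.1 hij) hj) hi
  · have : (0 : ℝ) ≤ (r₁ : ℝ)⁻¹ := by positivity
    have : (0 : ℝ) ≤ (r₂ : ℝ)⁻¹ := by positivity
    linarith
  · rfl

theorem inner_blockContrast {n : ℕ} (r₁ r₂ : ℕ) (x : EuclideanSpace ℝ (Fin n)) :
    ⟪x, blockContrast n r₁ r₂⟫ = (∑ i : Fin n, if (i : ℕ) < r₁ then x i else 0) / r₁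
      - (∑ i : Fin n, if r₁ ≤ (i : ℕ) then x i else 0) / r₂ := by
  simp only [PiLp.inner_apply, blockContrast, RCLike.inner_apply, conj_trivial, sum_div,
    ← sum_sub_distrib]
  refine sum_congr rfl fun i _ => ?_
  by_cases hi : (i : ℕ) < r₁
  · simp [hi, not_le.2 hi, div_eq_mul_inv, mul_comm]
  · simp [hi, not_lt.1 hi, div_eq_mul_inv, mul_comm]

theorem inner_constVec_blockContrast {r₁ r₂ n : ℕ} (hr₁ : 1 ≤ r₁) (hr₂ : 1 ≤ r₂)
    (hn : n = r₁ + r₂) (c : ℝ) : ⟪constVec n c, blockContrast n r₁ r₂⟫ = 0 := by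
  have hlow : #{i : Fin n | (i : ℕ) < r₁} = r₁ := by
    rw [Fin.card_filter_val_lt]
    omega
  have hhigh : #{i : Fin n | r₁ ≤ (i : ℕ)} = r₂ := by
    have := card_filter_add_card_filter_not (s := univ) (p := fun i : Fin n => (i : ℕ) < r₁)
    simp only [not_lt, hlow, card_univ, Fintype.card_fin] at this
    omega
  have hr₁' : (r₁ : ℝ) ≠ 0 := by positivity
  have hr₂' : (r₂ : ℝ) ≠ 0 := by positivity
  rw [inner_blockContrast]
  simp only [constVec, sum_ite, sum_const, smul_zero, add_zero, hlow, hhigh, nsmul_eq_mul]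
  field_simp
  ring

theorem no_constant_nearest_of_separated_block_means
    (r₁ r₂ : ℕ) (hr₁ : 1 ≤ r₁) (hr₂ : 1 ≤ r₂) (n : ℕ) (hn : n = r₁ + r₂)
    (x : EuclideanSpace ℝ (Fin n))
    (hmean : (∑ i : Fin n, if (i : ℕ) < r₁ then x i else 0) / r₁
           > (∑ i : Fin n, if r₁ ≤ (i : ℕ) then x i else 0) / r₂)
    (c : ℝ) :
    ∃ z : EuclideanSpace ℝ (Fin n),
      (∀ i j : Fin n, i ≤ j → z j ≤ z i) ∧
      ‖x - z‖ < ‖x - constVec n c‖ := by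
  have hpos : 0 < ⟪x - constVec n c, blockContrast n r₁ r₂⟫ := by
    rw [inner_sub_left, inner_blockContrast, inner_constVec_blockContrast hr₁ hr₂ hn]
    linarith
  obtain ⟨ε, hε, hcloser⟩ := exists_pos_norm_sub_add_smul_lt hpos
  refine ⟨constVec n c + ε • blockContrast n r₁ r₂, fun i j hij => ?_, hcloser⟩
  simpa [constVec] using mul_le_mul_of_nonneg_left (antitone_blockContrast n r₁ r₂ hij) hε.le
end

section
/- Let r₁, r₂ ≥ 1, n = r₁ + r₂, and let λ ∈ ℝⁿ satisfy (λ₁ + ⋯ + λ_{r₁})/r₁ − (λ_{r₁+1} + ⋯ + λ_n)/r₂ > (r₁ + r₂)/2. Then for every real number c there exists a weakly decreasing z ∈ ℝⁿ with ‖(λ − ρ) − z‖ < ‖(λ − ρ) − c·𝟙‖ in the Euclidean norm; that is, the nearest point to λ − ρ in the closed convex cone of weakly decreasing vectors is not a constant vector. -/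
/-- The Weyl vector `ρ` of `gl(n)`, with `i`-th coordinate `(n + 1 - 2i)/2`
(in 1-indexed notation). -/
noncomputable def rhoVec (n : ℕ) : EuclideanSpace ℝ (Fin n) :=
  WithLp.toLp 2 (fun i => ((n : ℝ) + 1 - 2 * ((i : ℕ) + 1)) / 2)

/-!
Put `u = (λ - ρ) - c𝟙` and let `v` be the weakly decreasing vector equal to `r₂` on the first `r₁`
coordinates and to `-r₁` on the last `r₂`. Then `v ⟂ 𝟙`, and the block sums of `ρ` are
`± r₁ r₂ / 2`, so `⟪u, v⟫ = r₁ r₂ (m₁ - m₂ - (r₁ + r₂) / 2) > 0`, where `m₁, m₂` are the block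
means of `λ`. Hence moving from `c𝟙` a little in the direction `v` stays weakly decreasing and comes strictly closer to `λ - ρ`.
-/

open Finset InnerProductSpace

theorem exists_pos_norm_sub_smul_lt_of_inner_pos {F : Type*} [NormedAddCommGroup F]
    [InnerProductSpace ℝ F] {u v : F} (huv : 0 < ⟪u, v⟫_ℝ) :
    ∃ t : ℝ, 0 < t ∧ ‖u - t • v‖ < ‖u‖ := by
  have hv : 0 < ‖v‖ ^ 2 := by
    have : v ≠ 0 := by rintro rfl; simp at huv
    positivity
  refine ⟨⟪u, v⟫_ℝ / ‖v‖ ^ 2, by positivity, ?_⟩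
  -- this `t` minimises `‖u - t • v‖`
  have hsq : ‖u - (⟪u, v⟫_ℝ / ‖v‖ ^ 2) • v‖ ^ 2 = ‖u‖ ^ 2 - ⟪u, v⟫_ℝ ^ 2 / ‖v‖ ^ 2 := by
    rw [norm_sub_sq_real, real_inner_smul_right, norm_smul, mul_pow, Real.norm_eq_abs, sq_abs]
    field_simp
    ring
  refine lt_of_pow_lt_pow_left₀ 2 (norm_nonneg u) ?_
  rw [hsq]
  have : 0 < ⟪u, v⟫_ℝ ^ 2 / ‖v‖ ^ 2 := by positivity
  linarith

section BlockSums

variable {n : ℕ}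

def headSum (r : ℕ) (x : EuclideanSpace ℝ (Fin n)) : ℝ :=
  ∑ i : Fin n, if (i : ℕ) < r then x i else 0

def tailSum (r : ℕ) (x : EuclideanSpace ℝ (Fin n)) : ℝ :=
  ∑ i : Fin n, if r ≤ (i : ℕ) then x i else 0

theorem sum_eq_headSum (x : EuclideanSpace ℝ (Fin n)) : ∑ i, x i = headSum n x :=
  sum_congr rfl fun i _ => (if_pos i.isLt).symm

theorem tailSum_eq_sum_sub_headSum (r : ℕ) (x : EuclideanSpace ℝ (Fin n)) :
    tailSum r x = ∑ i, x i - headSum r x := by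
  rw [eq_sub_iff_add_eq, headSum, tailSum, ← sum_add_distrib]
  refine sum_congr rfl fun i _ => ?_
  split_ifs <;> first | omega | simp

theorem headSum_toLp {r : ℕ} (hr : r ≤ n) (f : ℕ → ℝ) :
    headSum r (WithLp.toLp 2 fun i : Fin n => f i) = ∑ k ∈ range r, f k := by
  rw [headSum, Fin.sum_univ_eq_sum_range (fun k => if k < r then f k else 0), ← sum_filter]
  congr 1
  ext k
  simp only [mem_filter, mem_range]
  omega

theorem headSum_constVec {r : ℕ} (hr : r ≤ n) (c : ℝ) : headSum r (constVec n c) = r * c := by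
  rw [constVec, headSum_toLp hr fun _ => c, sum_const, card_range, nsmul_eq_mul]

theorem headSum_rhoVec {r : ℕ} (hr : r ≤ n) : headSum r (rhoVec n) = r * (n - r) / 2 := by
  rw [rhoVec, headSum_toLp hr fun k => ((n : ℝ) + 1 - 2 * (k + 1)) / 2]
  clear hr
  induction r with
  | zero => simp
  | succ r ih => rw [sum_range_succ, ih]; push_cast; ring

end BlockSums

def blockVec {n : ℕ} (r₁ r₂ : ℕ) : EuclideanSpace ℝ (Fin n) :=
  WithLp.toLp 2 fun i => if (i : ℕ) < r₁ then (r₂ : ℝ) else -r₁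

section BlockVec

variable {n : ℕ} (r₁ r₂ : ℕ)

theorem antitone_blockVec : Antitone (blockVec (n := n) r₁ r₂) := by
  intro i j hij
  have hij : (i : ℕ) ≤ j := hij
  have hneg : -(r₁ : ℝ) ≤ r₂ := by
    linarith [Nat.cast_nonneg (α := ℝ) r₁, Nat.cast_nonneg (α := ℝ) r₂]
  simp only [blockVec]
  split_ifs <;> first | exact le_rfl | exact hneg | omega

theorem inner_blockVec (x : EuclideanSpace ℝ (Fin n)) :
    ⟪x, blockVec r₁ r₂⟫_ℝ = r₂ * headSum r₁ x - r₁ * tailSum r₁ x := by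
  simp only [PiLp.inner_apply, blockVec, headSum, tailSum, mul_sum, ← sum_sub_distrib]
  refine sum_congr rfl fun i _ => ?_
  split_ifs <;> first | omega | simp

theorem inner_rhoVec_blockVec :
    ⟪rhoVec (r₁ + r₂), blockVec r₁ r₂⟫_ℝ = r₁ * r₂ * (r₁ + r₂) / 2 := by
  rw [inner_blockVec, tailSum_eq_sum_sub_headSum, sum_eq_headSum, headSum_rhoVec le_rfl,
    headSum_rhoVec (Nat.le_add_right r₁ r₂)]
  push_cast
  ring

theorem inner_constVec_blockVec (c : ℝ) : ⟪constVec (r₁ + r₂) c, blockVec r₁ r₂⟫_ℝ = 0 := by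
  rw [inner_blockVec, tailSum_eq_sum_sub_headSum, sum_eq_headSum, headSum_constVec le_rfl,
    headSum_constVec (Nat.le_add_right r₁ r₂)]
  push_cast
  ring

theorem inner_sub_rhoVec_sub_constVec_blockVec {r₁ r₂ : ℕ} (hr₁ : r₁ ≠ 0) (hr₂ : r₂ ≠ 0)
    (x : EuclideanSpace ℝ (Fin (r₁ + r₂))) (c : ℝ) :
    ⟪x - rhoVec (r₁ + r₂) - constVec (r₁ + r₂) c, blockVec r₁ r₂⟫_ℝ =
      r₁ * r₂ * (headSum r₁ x / r₁ - tailSum r₁ x / r₂ - (r₁ + r₂) / 2) := by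
  rw [inner_sub_left, inner_sub_left, inner_blockVec, inner_rhoVec_blockVec,
    inner_constVec_blockVec]
  field_simp
  ring

end BlockVec

theorem projection_not_constant_of_large_mean_gap
    (r₁ r₂ : ℕ) (hr₁ : 1 ≤ r₁) (hr₂ : 1 ≤ r₂) (n : ℕ) (hn : n = r₁ + r₂)
    (lam : EuclideanSpace ℝ (Fin n))
    (hmean : (∑ i : Fin n, if (i : ℕ) < r₁ then lam i else 0) / r₁
           - (∑ i : Fin n, if r₁ ≤ (i : ℕ) then lam i else 0) / r₂
           > ((r₁ : ℝ) + r₂) / 2)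
    (c : ℝ) :
    ∃ z : EuclideanSpace ℝ (Fin n),
      (∀ i j : Fin n, i ≤ j → z j ≤ z i) ∧
      ‖(lam - rhoVec n) - z‖ < ‖(lam - rhoVec n) - constVec n c‖ := by
  subst hn
  have hinner : 0 < ⟪lam - rhoVec (r₁ + r₂) - constVec (r₁ + r₂) c, blockVec r₁ r₂⟫_ℝ := by
    rw [inner_sub_rhoVec_sub_constVec_blockVec (by omega) (by omega)]
    exact mul_pos (by positivity) (sub_pos.2 hmean)
  obtain ⟨t, ht, hcloser⟩ := exists_pos_norm_sub_smul_lt_of_inner_pos hinner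
  refine ⟨constVec _ c + t • blockVec r₁ r₂, ?_, by rwa [sub_add_eq_sub_sub]⟩
  exact antitone_const.add ((antitone_blockVec r₁ r₂).const_mul ht.le)
end
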